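/- arXiv:2208.03743 — 2 statements merged into one kernel-verified Lean document; each statement's English description precedes it below -/
import Mathlib

section
/- For a maximal outerplanar graph G with Hamiltonian cycle v_1,...,v_n and any optimal 2-center (c_1, c_2) achieving radius r (i.e., every vertex is within distance r of c_1 or c_2, and r is minimal over all pairs of vertices), there exists a partition of V into two sets S_1, S_2, each consisting of consecutive vertices in the cyclic order, such that every vertex of S_1 is within distance r of c_1 and every vertex of S_2 is within distance r of c_2. -/
/-- Two chords of the convex polygon on vertices `0 < 1 < ⋯ < n-1`, given by their
sorted endpoint pairs `(a,b)` and `(c,d)`, cross each other. -/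
def Crossing {n : ℕ} (a b c d : Fin n) : Prop :=
  (a < c ∧ c < b ∧ b < d) ∨ (c < a ∧ a < d ∧ d < b)

/-- The cyclic successor of a vertex of `Fin n`. -/
def cycSucc {n : ℕ} (i : Fin n) : Fin n := ⟨(i.val + 1) % n, Nat.mod_lt _ i.pos⟩

/-- `G` is a maximal outerplanar graph (mop) whose outer Hamiltonian cycle is
`0, 1, …, n-1, 0`: it contains all cycle edges, its chords are pairwise
non-crossing (outerplanarity of the embedding), and no further chord can be
added without crossing an existing edge (maximality). -/
def IsMop {n : ℕ} (G : SimpleGraph (Fin n)) : Prop :=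
  3 ≤ n ∧
  (∀ i : Fin n, G.Adj i (cycSucc i)) ∧
  (∀ a b c d : Fin n, a < b → c < d → G.Adj a b → G.Adj c d → ¬ Crossing a b c d) ∧
  (∀ a b : Fin n, a < b → ¬ G.Adj a b →
    ∃ c d : Fin n, c < d ∧ G.Adj c d ∧ Crossing a b c d)

/-- The edge `{u,v}` (with `u < v`) is an internal edge (chord) of the mop on
`Fin n`, i.e. it is not one of the Hamiltonian cycle edges. -/
def IsChord {n : ℕ} (u v : Fin n) : Prop :=
  u.val + 1 < v.val ∧ ¬(u.val = 0 ∧ v.val = n - 1)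

/-- The set of `len` consecutive vertices `a, a+1, …, a+len-1` (cyclically) on the
Hamiltonian cycle of the mop on `Fin n`. -/
def cInterval (n : ℕ) (a : Fin n) (len : ℕ) : Set (Fin n) :=
  {x : Fin n | ∃ k : ℕ, k < len ∧ x.val = (a.val + k) % n}

namespace Mop

variable {n : ℕ} {G : SimpleGraph (Fin n)}

def NC (G : SimpleGraph (Fin n)) : Prop :=
  ∀ a b c d : Fin n, a < b → c < d → G.Adj a b → G.Adj c d → ¬ Crossing a b c d

lemma between_iff {p q a : Fin n} (hpq : p < q) (haq : a ≠ q) :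
    (¬((p < a) ↔ (q < a))) ↔ (p < a ∧ a < q) := by
  constructor
  · intro h
    by_cases h1 : p < a
    · have h2 : ¬ q < a := fun hq => h ⟨fun _ => hq, fun _ => h1⟩
      exact ⟨h1, lt_of_le_of_ne (not_lt.mp h2) haq⟩
    · have h2 : q < a := by
        by_contra h2
        exact h (iff_of_false (fun hh => h1 hh) h2)
      exact absurd (lt_trans hpq h2) h1
  · rintro ⟨h1, h2⟩ hiff
    exact absurd (hiff.mp h1) (not_lt.mpr h2.le)

lemma inside_closed (hnc : NC G) {p q a b : Fin n} (hpq : p < q)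
    (hadjpq : G.Adj p q) (hadjab : G.Adj a b) (hbp : b ≠ p) (hbq : b ≠ q)
    (ha : p < a ∧ a < q) : p < b ∧ b < q := by
  rcases lt_trichotomy b p with h | h | h
  · have hba : b < a := lt_trans h ha.1
    exact absurd (Or.inl ⟨h, ha.1, ha.2⟩) (hnc b a p q hba hpq hadjab.symm hadjpq)
  · exact absurd h hbp
  · rcases lt_trichotomy b q with h' | h' | h'
    · exact ⟨h, h'⟩
    · exact absurd h' hbq
    · have hab : a < b := lt_trans ha.2 h'
      exact absurd (Or.inl ⟨ha.1, ha.2, h'⟩) (hnc p q a b hpq hab hadjpq hadjab)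

lemma key (hnc : NC G) {p q a b : Fin n} (hpq : p < q)
    (hadjpq : G.Adj p q) (hadjab : G.Adj a b)
    (hap : a ≠ p) (haq : a ≠ q) (hbp : b ≠ p) (hbq : b ≠ q) :
    ((p < a) ↔ (q < a)) ↔ ((p < b) ↔ (q < b)) := by
  rw [← not_iff_not, between_iff hpq haq, between_iff hpq hbq]
  constructor
  · exact inside_closed hnc hpq hadjpq hadjab hbp hbq
  · exact inside_closed hnc hpq hadjpq hadjab.symm hap haq

/-- number of darts of `W` whose endpoints are on opposite sides of `v`. -/
def cnt (W : G.Walk x y) (v : Fin n) : ℕ :=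
  W.darts.countP (fun d => decide (d.toProd.1 < v) != decide (d.toProd.2 < v))

lemma parity {x y : Fin n} (W : G.Walk x y) (v : Fin n) :
    Even (cnt W v) ↔ ((x < v) ↔ (y < v)) := by
  induction W with
  | nil => simp [cnt]
  | @cons u u' w h p ih =>
    have hstep : cnt (SimpleGraph.Walk.cons h p) v =
        cnt p v + if (decide (u < v) != decide (u' < v)) = true then 1 else 0 := by
      rw [cnt, SimpleGraph.Walk.darts_cons, List.countP_cons]
      rfl
    by_cases hd : (u < v) ↔ (u' < v)
    · have hb : (decide (u < v) != decide (u' < v)) = false := by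
        simp [decide_eq_decide.mpr hd]
      rw [hstep, hb]
      simp only [Bool.false_eq_true, if_false, Nat.add_zero]
      rw [ih]
      tauto
    · have hb : (decide (u < v) != decide (u' < v)) = true := by
        by_cases h1 : u < v <;> by_cases h2 : u' < v <;> simp_all
      rw [hstep, hb, if_pos rfl, Nat.even_add_one, ih]
      tauto

lemma cnt_edge (hnc : NC G) {x y a b : Fin n} (W : G.Walk x y) (hadj : G.Adj a b)
    (ha : a ∉ W.support) (hb : b ∉ W.support) : cnt W a = cnt W b := by
  unfold cnt
  apply List.countP_congr
  intro d hd
  have h1 : d.toProd.1 ∈ W.support := W.dart_fst_mem_support_of_mem_darts hd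
  have h2 : d.toProd.2 ∈ W.support := W.dart_snd_mem_support_of_mem_darts hd
  have hap : a ≠ d.toProd.1 := fun h => ha (h ▸ h1)
  have haq : a ≠ d.toProd.2 := fun h => ha (h ▸ h2)
  have hbp : b ≠ d.toProd.1 := fun h => hb (h ▸ h1)
  have hbq : b ≠ d.toProd.2 := fun h => hb (h ▸ h2)
  have hiff : ((d.toProd.1 < a) ↔ (d.toProd.2 < a)) ↔ ((d.toProd.1 < b) ↔ (d.toProd.2 < b)) := by
    rcases lt_trichotomy d.toProd.1 d.toProd.2 with h | h | h
    · exact key hnc h d.adj hadj hap haq hbp hbq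
    · exact absurd h d.adj.ne
    · have := key hnc h d.adj.symm hadj haq hap hbq hbp
      tauto
  have boolext : ∀ (P Q R S : Prop) (_ : Decidable P) (_ : Decidable Q) (_ : Decidable R)
      (_ : Decidable S), ((P ↔ Q) ↔ (R ↔ S)) → (decide P != decide Q) = (decide R != decide S) := by
    intro P Q R S _ _ _ _ hh
    by_cases hP : P <;> by_cases hQ : Q <;> by_cases hR : R <;> by_cases hS : S <;> simp_all
  rw [boolext _ _ _ _ _ _ _ _ hiff]

lemma sep (hnc : NC G) {x₁ x₂ : Fin n} (W : G.Walk x₁ x₂) :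
    ∀ {y z : Fin n} (W₂ : G.Walk y z),
      ¬((x₁ < y) ↔ (x₂ < y)) → ((x₁ < z) ↔ (x₂ < z)) →
      ∃ u, u ∈ W₂.support ∧ u ∈ W.support := by
  intro y z W₂
  induction W₂ with
  | nil => exact fun h1 h2 => absurd h2 h1
  | @cons u u' w h p ih =>
    intro h1 h2
    by_cases hy : u ∈ W.support
    · exact ⟨u, SimpleGraph.Walk.start_mem_support _, hy⟩
    by_cases hy' : u' ∈ W.support
    · refine ⟨u', ?_, hy'⟩
      rw [SimpleGraph.Walk.support_cons]
      exact List.mem_cons_of_mem _ (SimpleGraph.Walk.start_mem_support _)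
    · have hside : ¬((x₁ < u') ↔ (x₂ < u')) := by
        intro hcon
        apply h1
        rw [← parity W u, cnt_edge hnc W h hy hy', parity W u']
        exact hcon
      obtain ⟨v, hv1, hv2⟩ := ih hside h2
      refine ⟨v, ?_, hv2⟩
      rw [SimpleGraph.Walk.support_cons]
      exact List.mem_cons_of_mem _ hv1

lemma split_bound {s t u : Fin n} (W : G.Walk s t) (hu : u ∈ W.support) :
    G.dist s u + G.dist u t ≤ W.length := by
  have h := W.take_spec hu
  calc G.dist s u + G.dist u t
      ≤ (W.takeUntil u hu).length + (W.dropUntil u hu).length :=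
        Nat.add_le_add (SimpleGraph.dist_le _) (SimpleGraph.dist_le _)
    _ = W.length := by rw [← SimpleGraph.Walk.length_append, h]

lemma core (hnc : NC G) (hconn : G.Connected) {c c' : Fin n} {r : ℕ}
    (hcov : ∀ v, G.dist v c ≤ r ∨ G.dist v c' ≤ r)
    {w x y z : Fin n} (h1 : w < x) (h2 : x < y) (h3 : y < z)
    (hw : r < G.dist w c) (hy : r < G.dist y c)
    (hx : r < G.dist x c') (hz : r < G.dist z c') : False := by
  have hwc' : G.dist w c' ≤ r := (hcov w).resolve_left (not_le.mpr hw)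
  have hyc' : G.dist y c' ≤ r := (hcov y).resolve_left (not_le.mpr hy)
  have hxc : G.dist x c ≤ r := (hcov x).resolve_right (not_le.mpr hx)
  have hzc : G.dist z c ≤ r := (hcov z).resolve_right (not_le.mpr hz)
  obtain ⟨p₁, hp₁⟩ := hconn.exists_walk_length_eq_dist w c'
  obtain ⟨p₂, hp₂⟩ := hconn.exists_walk_length_eq_dist c' y
  obtain ⟨q₁, hq₁⟩ := hconn.exists_walk_length_eq_dist x c
  obtain ⟨q₂, hq₂⟩ := hconn.exists_walk_length_eq_dist c z
  have hside1 : ¬((w < x) ↔ (y < x)) := by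
    intro hcon
    exact absurd (hcon.mp h1) (not_lt.mpr h2.le)
  have hside2 : ((w < z) ↔ (y < z)) := iff_of_true (h1.trans (h2.trans h3)) h3
  obtain ⟨u, hu2, hu1⟩ := sep hnc (p₁.append p₂) (q₁.append q₂) hside1 hside2
  -- s ∈ {w, y} with far-from-c and dist s u + dist u c' ≤ r
  obtain ⟨s, hs1, hs2⟩ : ∃ s : Fin n, r < G.dist s c ∧ G.dist s u + G.dist u c' ≤ r := by
    rcases (SimpleGraph.Walk.mem_support_append_iff _ _).mp hu1 with h | h
    · refine ⟨w, hw, ?_⟩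
      have := split_bound p₁ h
      rw [hp₁] at this
      exact this.trans hwc'
    · refine ⟨y, hy, ?_⟩
      have := split_bound p₂ h
      rw [hp₂] at this
      have hcomm : G.dist y u + G.dist u c' = G.dist c' u + G.dist u y := by
        rw [SimpleGraph.dist_comm (u := y) (v := u), SimpleGraph.dist_comm (u := u) (v := c')]
        ring
      rw [hcomm]
      exact this.trans (by rw [SimpleGraph.dist_comm]; exact hyc')
  obtain ⟨t, ht1, ht2⟩ : ∃ t : Fin n, r < G.dist t c' ∧ G.dist t u + G.dist u c ≤ r := by
    rcases (SimpleGraph.Walk.mem_support_append_iff _ _).mp hu2 with h | h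
    · refine ⟨x, hx, ?_⟩
      have := split_bound q₁ h
      rw [hq₁] at this
      exact this.trans hxc
    · refine ⟨z, hz, ?_⟩
      have := split_bound q₂ h
      rw [hq₂] at this
      have hcomm : G.dist z u + G.dist u c = G.dist c u + G.dist u z := by
        rw [SimpleGraph.dist_comm (u := z) (v := u), SimpleGraph.dist_comm (u := u) (v := c)]
        ring
      rw [hcomm]
      exact this.trans (by rw [SimpleGraph.dist_comm]; exact hzc)
  have t1 : G.dist s c ≤ G.dist s u + G.dist u c := hconn.dist_triangle
  have t2 : G.dist t c' ≤ G.dist t u + G.dist u c' := hconn.dist_triangle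
  omega

end Mop

/-- For any optimal 2-center `(c₁, c₂)` of a maximal outerplanar graph achieving
radius `r`, the vertex set can be partitioned into two sets of consecutive vertices
of the Hamiltonian cycle (a cyclic interval and its complement), the first covered
by `c₁` within distance `r` and the second covered by `c₂` within distance `r`. -/
theorem stmt_7 {n : ℕ} (G : SimpleGraph (Fin n)) (hG : IsMop G)
    (c₁ c₂ : Fin n) (r : ℕ)
    (hcov : ∀ v : Fin n, min (G.dist v c₁) (G.dist v c₂) ≤ r)
    (hopt : ∀ c₁' c₂' : Fin n, ∃ v : Fin n, r ≤ min (G.dist v c₁') (G.dist v c₂')) :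
    ∃ (a : Fin n) (len : ℕ), len ≤ n ∧
      (∀ v : Fin n, v ∈ cInterval n a len → G.dist v c₁ ≤ r) ∧
      (∀ v : Fin n, v ∉ cInterval n a len → G.dist v c₂ ≤ r) := by
  obtain ⟨hn3, hcyc, hnc, -⟩ := hG
  have hn0 : 0 < n := by omega
  -- connectivity
  have hreach : ∀ k : ℕ, G.Reachable ⟨0, hn0⟩ ⟨k % n, Nat.mod_lt _ hn0⟩ := by
    intro k
    induction k with
    | zero =>
      have heq : (⟨0 % n, Nat.mod_lt _ hn0⟩ : Fin n) = ⟨0, hn0⟩ := Fin.ext (Nat.zero_mod n)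
      rw [heq]
    | succ k ih =>
      have hadj := hcyc ⟨k % n, Nat.mod_lt _ hn0⟩
      have heq : cycSucc (⟨k % n, Nat.mod_lt _ hn0⟩ : Fin n) = ⟨(k+1) % n, Nat.mod_lt _ hn0⟩ :=
        Fin.ext (by simp [cycSucc, Nat.mod_add_mod])
      rw [heq] at hadj
      exact ih.trans hadj.reachable
  have hconn : G.Connected := by
    rw [SimpleGraph.connected_iff]
    refine ⟨fun u v => ?_, ⟨⟨0, hn0⟩⟩⟩
    have hu := hreach u.val
    have hv := hreach v.val
    have hue : (⟨u.val % n, Nat.mod_lt _ hn0⟩ : Fin n) = u := Fin.ext (Nat.mod_eq_of_lt u.isLt)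
    have hve : (⟨v.val % n, Nat.mod_lt _ hn0⟩ : Fin n) = v := Fin.ext (Nat.mod_eq_of_lt v.isLt)
    rw [hue] at hu
    rw [hve] at hv
    exact hu.symm.trans hv
  have hPQ : ∀ v : Fin n, G.dist v c₁ ≤ r ∨ G.dist v c₂ ≤ r := fun v => min_le_iff.mp (hcov v)
  by_cases hQall : ∀ v, G.dist v c₂ ≤ r
  · exact ⟨⟨0, hn0⟩, 0, by omega,
      fun v hv => by obtain ⟨k, hk, -⟩ := hv; omega, fun v _ => hQall v⟩
  by_cases hPall : ∀ v, G.dist v c₁ ≤ r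
  · refine ⟨⟨0, hn0⟩, n, le_refl n, fun v _ => hPall v, fun v hv => absurd ?_ hv⟩
    exact ⟨v.val, v.isLt, by simp [Nat.mod_eq_of_lt v.isLt]⟩
  push_neg at hQall hPall
  obtain ⟨y₀, hy₀⟩ := hPall
  -- positions relative to y₀
  set pos : Fin n → ℕ := fun v => (v.val + (n - y₀.val)) % n with hposdef
  have pos_lt : ∀ v, pos v < n := fun v => Nat.mod_lt _ hn0
  have pos_spec : ∀ v : Fin n, (y₀.val + pos v) % n = v.val := by
    intro v
    have h1 : y₀.val + (n - y₀.val) = n := by omega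
    calc (y₀.val + (v.val + (n - y₀.val)) % n) % n
        = (y₀.val + (v.val + (n - y₀.val))) % n := Nat.add_mod_mod _ _ _
      _ = (v.val + n) % n := congrArg (· % n) (by omega)
      _ = v.val % n := Nat.add_mod_right _ _
      _ = v.val := Nat.mod_eq_of_lt v.isLt
  have pos_inj : ∀ u v : Fin n, pos u = pos v → u = v := by
    intro u v h
    have := pos_spec u
    rw [h, pos_spec v] at this
    exact (Fin.ext this).symm
  have pos_y₀ : pos y₀ = 0 := by
    have h1 : y₀.val + (n - y₀.val) = n := by omega
    show (y₀.val + (n - y₀.val)) % n = 0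
    rw [h1, Nat.mod_self]
  classical
  set T : Finset (Fin n) := Finset.univ.filter (fun v => r < G.dist v c₂) with hTdef
  have hTne : T.Nonempty := by
    obtain ⟨v, hv⟩ := hQall
    exact ⟨v, Finset.mem_filter.mpr ⟨Finset.mem_univ _, hv⟩⟩
  obtain ⟨v₁, hv₁T, hv₁min⟩ := T.exists_min_image pos hTne
  obtain ⟨v₂, hv₂T, hv₂max⟩ := T.exists_max_image pos hTne
  have hv₁far : r < G.dist v₁ c₂ := by simpa [hTdef] using hv₁T
  have hv₂far : r < G.dist v₂ c₂ := by simpa [hTdef] using hv₂T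
  have hv₁close : G.dist v₁ c₁ ≤ r := (hPQ v₁).resolve_right (not_le.mpr hv₁far)
  have hv₂close : G.dist v₂ c₁ ≤ r := (hPQ v₂).resolve_right (not_le.mpr hv₂far)
  have hm12 : pos v₁ ≤ pos v₂ := hv₁min v₂ hv₂T
  have hy₀far : r < G.dist y₀ c₁ := hy₀
  have hm₁pos : 0 < pos v₁ := by
    rcases Nat.eq_zero_or_pos (pos v₁) with h | h
    · exfalso
      have : v₁ = y₀ := pos_inj _ _ (h.trans pos_y₀.symm)
      rw [this] at hv₁close
      omega
    · exact h
  -- membership characterization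
  have mem_iff : ∀ v : Fin n, v ∈ cInterval n v₁ (pos v₂ - pos v₁ + 1) ↔
      (pos v₁ ≤ pos v ∧ pos v ≤ pos v₂) := by
    intro v
    constructor
    · rintro ⟨k, hk, hval⟩
      have hcalc : pos v = (pos v₁ + k) % n := by
        show (v.val + (n - y₀.val)) % n = _
        rw [hval]
        calc ((v₁.val + k) % n + (n - y₀.val)) % n
            = (v₁.val + k + (n - y₀.val)) % n := Nat.mod_add_mod _ _ _
          _ = (v₁.val + (n - y₀.val) + k) % n := by ring_nf
          _ = ((v₁.val + (n - y₀.val)) % n + k) % n := (Nat.mod_add_mod _ _ _).symm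
      have hlt : pos v₁ + k < n := by
        have := pos_lt v₂
        omega
      rw [hcalc, Nat.mod_eq_of_lt hlt]
      omega
    · rintro ⟨h1, h2⟩
      refine ⟨pos v - pos v₁, by omega, ?_⟩
      have : (v₁.val + (pos v - pos v₁)) % n
          = (y₀.val + pos v₁ + (pos v - pos v₁)) % n := by
        conv_lhs => rw [← pos_spec v₁]
        rw [Nat.mod_add_mod]
      rw [this, show y₀.val + pos v₁ + (pos v - pos v₁) = y₀.val + pos v from by omega,
        pos_spec v]
  refine ⟨v₁, pos v₂ - pos v₁ + 1, by have := pos_lt v₂; omega, ?_, ?_⟩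
  · -- interval covered by c₁
    intro v hv
    by_contra hPv
    have hvfar : r < G.dist v c₁ := not_le.mp hPv
    have hvclose : G.dist v c₂ ≤ r := (hPQ v).resolve_left hPv
    obtain ⟨h1, h2⟩ := (mem_iff v).mp hv
    have hne1 : v ≠ v₁ := by
      intro h
      rw [h] at hPv
      exact hPv hv₁close
    have hne2 : v ≠ v₂ := by
      intro h
      rw [h] at hPv
      exact hPv hv₂close
    have hs1 : pos v₁ < pos v := lt_of_le_of_ne h1 (fun h => hne1 (pos_inj _ _ h.symm))
    have hs2 : pos v < pos v₂ := lt_of_le_of_ne h2 (fun h => hne2 (pos_inj _ _ h))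
    -- values of the four vertices
    set Y := y₀.val with hY
    set m₁ := pos v₁
    set m₂ := pos v₂
    set p := pos v
    have hYlt : Y < n := y₀.isLt
    have hval₁ : v₁.val = (Y + m₁) % n := (pos_spec v₁).symm
    have hvalv : v.val = (Y + p) % n := (pos_spec v).symm
    have hval₂ : v₂.val = (Y + m₂) % n := (pos_spec v₂).symm
    have hm₂lt : m₂ < n := pos_lt v₂
    have hm₁p : m₁ < p := hs1
    have hpm₂ : p < m₂ := hs2
    have modlow : ∀ m : ℕ, Y + m < n → (Y + m) % n = Y + m := fun m hm => Nat.mod_eq_of_lt hm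
    have modhigh : ∀ m : ℕ, m < n → ¬ (Y + m < n) → (Y + m) % n = Y + m - n := by
      intro m hm hm'
      rw [Nat.mod_eq_sub_mod (by omega)]
      exact Nat.mod_eq_of_lt (by omega)
    have hPQ' : ∀ v : Fin n, G.dist v c₂ ≤ r ∨ G.dist v c₁ ≤ r := fun v => (hPQ v).symm
    by_cases c1 : Y + m₁ < n
    · have e1 : v₁.val = Y + m₁ := by rw [hval₁, modlow _ c1]
      by_cases c2 : Y + p < n
      · have e2 : v.val = Y + p := by rw [hvalv, modlow _ c2]
        by_cases c3 : Y + m₂ < n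
        · have e3 : v₂.val = Y + m₂ := by rw [hval₂, modlow _ c3]
          exact Mop.core hnc hconn hPQ
            (show y₀ < v₁ from by rw [Fin.lt_def, e1]; omega)
            (show v₁ < v from by rw [Fin.lt_def, e1, e2]; omega)
            (show v < v₂ from by rw [Fin.lt_def, e2, e3]; omega)
            hy₀far hvfar hv₁far hv₂far
        · have e3 : v₂.val = Y + m₂ - n := by rw [hval₂, modhigh _ hm₂lt c3]
          exact Mop.core hnc hconn hPQ'
            (show v₂ < y₀ from by rw [Fin.lt_def, e3]; omega)
            (show y₀ < v₁ from by rw [Fin.lt_def, e1]; omega)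
            (show v₁ < v from by rw [Fin.lt_def, e1, e2]; omega)
            hv₂far hv₁far hy₀far hvfar
      · have e2 : v.val = Y + p - n := by rw [hvalv, modhigh _ (by omega) c2]
        have c3 : ¬ (Y + m₂ < n) := by omega
        have e3 : v₂.val = Y + m₂ - n := by rw [hval₂, modhigh _ hm₂lt c3]
        exact Mop.core hnc hconn hPQ
          (show v < v₂ from by rw [Fin.lt_def, e2, e3]; omega)
          (show v₂ < y₀ from by rw [Fin.lt_def, e3]; omega)
          (show y₀ < v₁ from by rw [Fin.lt_def, e1]; omega)
          hvfar hy₀far hv₂far hv₁far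
    · have e1 : v₁.val = Y + m₁ - n := by rw [hval₁, modhigh _ (by omega) c1]
      have c2 : ¬ (Y + p < n) := by omega
      have c3 : ¬ (Y + m₂ < n) := by omega
      have e2 : v.val = Y + p - n := by rw [hvalv, modhigh _ (by omega) c2]
      have e3 : v₂.val = Y + m₂ - n := by rw [hval₂, modhigh _ hm₂lt c3]
      exact Mop.core hnc hconn hPQ'
        (show v₁ < v from by rw [Fin.lt_def, e1, e2]; omega)
        (show v < v₂ from by rw [Fin.lt_def, e2, e3]; omega)
        (show v₂ < y₀ from by rw [Fin.lt_def, e3]; omega)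
        hv₁far hv₂far hvfar hy₀far
  · -- complement covered by c₂
    intro v hv
    by_contra hQv
    have : v ∈ T := Finset.mem_filter.mpr ⟨Finset.mem_univ _, not_le.mp hQv⟩
    exact hv ((mem_iff v).mpr ⟨hv₁min v this, hv₂max v this⟩)
end

section
/- If a maximal outerplanar graph G is cut along a chord e into two induced subgraphs G_α and G_β each containing both endpoints of e, then for any two vertices x ∈ G_α and y ∈ G_β, every shortest path in G from x to y passes through an endpoint of e; consequently d_G(x,y) = min over endpoints w of e of (d_{G_α}(x,w) + d_{G_β}(w,y)). -/
/-!
Every edge with an endpoint strictly between `u` and `v` on the cycle stays in the closed interval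
`[u, v]`, since otherwise it would cross the chord `uv`. So both sides `G_α` and `G_β` are left only
through `u` or `v`, which are adjacent; collapsing everything outside a side to `u` therefore maps
walks of `G` onto walks of that side without making them longer. Hence both sides are isometric
subgraphs of `G`, and a walk from one side to the other must meet `u` or `v`, where a shortest
`x`–`y` walk splits into two shortest walks.
-/

open SimpleGraph

namespace SimpleGraph

variable {V W : Type*} {G : SimpleGraph V}

theorem Walk.exists_walk_length_le_of_eq_or_adj {G' : SimpleGraph W} (f : V → W)
    (hf : ∀ a b, G.Adj a b → f a = f b ∨ G'.Adj (f a) (f b)) {a b : V} :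
    ∀ p : G.Walk a b, ∃ q : G'.Walk (f a) (f b), q.length ≤ p.length
  | .nil => ⟨.nil, le_rfl⟩
  | .cons h p => by
    obtain ⟨q, hq⟩ := exists_walk_length_le_of_eq_or_adj f hf p
    rcases hf _ _ h with heq | hadj
    · exact ⟨q.copy heq.symm rfl, by simp only [Walk.length_copy, Walk.length_cons]; omega⟩
    · exact ⟨.cons hadj q, by simp only [Walk.length_cons]; omega⟩

theorem Reachable.dist_le_induce_dist {S : Set V} {a b : S} (h : (G.induce S).Reachable a b) :
    G.dist a b ≤ (G.induce S).dist a b := by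
  obtain ⟨p, hp⟩ := h.exists_walk_length_eq_dist
  rw [← hp, ← Walk.length_map (Embedding.induce S).toHom]
  exact dist_le _

theorem Walk.dist_add_dist_le_length {x y w : V} (p : G.Walk x y) (hw : w ∈ p.support) :
    G.dist x w + G.dist w y ≤ p.length := by
  classical
  rw [← p.take_spec hw, Walk.length_append]
  exact add_le_add (dist_le _) (dist_le _)

section Guarded

variable {S : Set V} {c : V} (hc : c ∈ S)
  (hS : ∀ a b, G.Adj a b → a ∈ S → b ∉ S → a = c ∨ G.Adj a c)
include hc hS

theorem Walk.exists_induce_walk_length_le {a b : V} (p : G.Walk a b) (ha : a ∈ S) (hb : b ∈ S) :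
    ∃ q : (G.induce S).Walk ⟨a, ha⟩ ⟨b, hb⟩, q.length ≤ p.length := by
  classical
  let r : V → S := fun z => if hz : z ∈ S then ⟨z, hz⟩ else ⟨c, hc⟩
  have hr : ∀ a b, G.Adj a b → r a = r b ∨ (G.induce S).Adj (r a) (r b) := by
    intro a b hab
    by_cases ha : a ∈ S <;> by_cases hb : b ∈ S
    · exact .inr (by simpa [r, ha, hb] using hab)
    · rcases hS a b hab ha hb with rfl | hac
      · exact .inl (by simp [r, ha, hb])
      · exact .inr (by simpa [r, ha, hb] using hac)
    · rcases hS b a hab.symm hb ha with rfl | hbc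
      · exact .inl (by simp [r, ha, hb])
      · exact .inr (by simpa [r, ha, hb] using hbc.symm)
    · exact .inl (by simp [r, ha, hb])
  obtain ⟨q, hq⟩ := p.exists_walk_length_le_of_eq_or_adj r hr
  exact ⟨q.copy (by simp [r, ha]) (by simp [r, hb]), by rwa [Walk.length_copy]⟩

theorem Reachable.induce_dist_eq {a b : V} (h : G.Reachable a b) (ha : a ∈ S) (hb : b ∈ S) :
    (G.induce S).dist ⟨a, ha⟩ ⟨b, hb⟩ = G.dist a b := by
  obtain ⟨p, hp⟩ := h.exists_walk_length_eq_dist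
  obtain ⟨q, hq⟩ := p.exists_induce_walk_length_le hc hS ha hb
  exact le_antisymm ((dist_le q).trans (hq.trans hp.le)) q.reachable.dist_le_induce_dist

end Guarded

end SimpleGraph

def NonCrossing {n : ℕ} (G : SimpleGraph (Fin n)) : Prop :=
  ∀ a b c d : Fin n, a < b → c < d → G.Adj a b → G.Adj c d → ¬ Crossing a b c d

theorem IsMop.nonCrossing {n : ℕ} {G : SimpleGraph (Fin n)} (hG : IsMop G) : NonCrossing G :=
  hG.2.2.1

theorem IsMop.pathGraph_le {n : ℕ} {G : SimpleGraph (Fin n)} (hG : IsMop G) : pathGraph n ≤ G := by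
  have hsucc : ∀ a b : Fin n, a.val + 1 = b.val → G.Adj a b := by
    intro a b h
    have hab : cycSucc a = b := Fin.ext (by simp [cycSucc, h, Nat.mod_eq_of_lt b.isLt])
    exact hab ▸ hG.2.1 a
  intro a b h
  rcases pathGraph_adj.mp h with h | h
  · exact hsucc a b h
  · exact (hsucc b a h).symm

theorem IsMop.connected {n : ℕ} [Nonempty (Fin n)] {G : SimpleGraph (Fin n)} (hG : IsMop G) :
    G.Connected :=
  ⟨(pathGraph_preconnected n).mono hG.pathGraph_le⟩

namespace NonCrossing

variable {n : ℕ} {G : SimpleGraph (Fin n)} {u v : Fin n}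
  (hnc : NonCrossing G) (huv : u < v) (hadj : G.Adj u v)
include hnc huv hadj

theorem mem_Icc_of_adj_of_mem_Ioo {a b : Fin n} (hab : G.Adj a b) (ha : a ∈ Set.Ioo u v) :
    b ∈ Set.Icc u v := by
  by_contra hb
  rcases not_and_or.mp hb with hb | hb <;> push Not at hb
  · exact hnc b a u v (hb.trans ha.1) huv hab.symm hadj (.inl ⟨hb, ha.1, ha.2⟩)
  · exact hnc a b u v (ha.2.trans hb) huv hab hadj (.inr ⟨ha.1, ha.2, hb⟩)

theorem eq_or_eq_of_adj_of_mem_Icc {a b : Fin n} (hab : G.Adj a b) (ha : a ∈ Set.Icc u v)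
    (hb : b ∉ Set.Icc u v) : a = u ∨ a = v := by
  by_contra h
  push Not at h
  exact hb (hnc.mem_Icc_of_adj_of_mem_Ioo huv hadj hab
    ⟨lt_of_le_of_ne ha.1 h.1.symm, lt_of_le_of_ne ha.2 h.2⟩)

theorem eq_or_eq_of_adj_of_le_or_le {a b : Fin n} (hab : G.Adj a b)
    (ha : a ∈ {z | z ≤ u ∨ v ≤ z}) (hb : b ∉ {z | z ≤ u ∨ v ≤ z}) : a = u ∨ a = v := by
  obtain ⟨hub, hbv⟩ := not_or.mp hb
  have := hnc.mem_Icc_of_adj_of_mem_Ioo huv hadj hab.symm ⟨not_le.mp hub, not_le.mp hbv⟩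
  rcases ha with ha | ha
  · exact .inl (le_antisymm ha this.1)
  · exact .inr (le_antisymm this.2 ha)

theorem mem_support_or_mem_support {x y : Fin n} (p : G.Walk x y) (hx : x ∈ Set.Icc u v)
    (hy : y ∈ {z | z ≤ u ∨ v ≤ z}) : u ∈ p.support ∨ v ∈ p.support := by
  by_cases hyA : y ∈ Set.Icc u v
  · rcases hy with hy | hy
    · exact .inl (le_antisymm hy hyA.1 ▸ p.end_mem_support)
    · exact .inr (le_antisymm hyA.2 hy ▸ p.end_mem_support)
  obtain ⟨d, hd, hdA, hdA'⟩ := p.exists_boundary_dart _ hx hyA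
  rcases hnc.eq_or_eq_of_adj_of_mem_Icc huv hadj d.adj hdA hdA' with h | h
  · exact .inl (h ▸ p.dart_fst_mem_support_of_mem_darts hd)
  · exact .inr (h ▸ p.dart_fst_mem_support_of_mem_darts hd)

theorem induce_dist_eq_of_mem_Icc {a b : Fin n} (h : G.Reachable a b)
    (ha : a ∈ {z | u ≤ z ∧ z ≤ v}) (hb : b ∈ {z | u ≤ z ∧ z ≤ v}) :
    (G.induce {z | u ≤ z ∧ z ≤ v}).dist ⟨a, ha⟩ ⟨b, hb⟩ = G.dist a b :=
  h.induce_dist_eq (S := {z | u ≤ z ∧ z ≤ v}) ⟨le_rfl, huv.le⟩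
    (fun _ _ hab ha hb => (hnc.eq_or_eq_of_adj_of_mem_Icc huv hadj hab ha hb).imp_right
      (by rintro rfl; exact hadj.symm)) ha hb

theorem induce_dist_eq_of_le_or_le {a b : Fin n} (h : G.Reachable a b)
    (ha : a ∈ {z | z ≤ u ∨ v ≤ z}) (hb : b ∈ {z | z ≤ u ∨ v ≤ z}) :
    (G.induce {z | z ≤ u ∨ v ≤ z}).dist ⟨a, ha⟩ ⟨b, hb⟩ = G.dist a b :=
  h.induce_dist_eq (S := {z | z ≤ u ∨ v ≤ z}) (.inl le_rfl)
    (fun _ _ hab ha hb => (hnc.eq_or_eq_of_adj_of_le_or_le huv hadj hab ha hb).imp_right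
      (by rintro rfl; exact hadj.symm)) ha hb

end NonCrossing

theorem stmt_10_general {n : ℕ} (G : SimpleGraph (Fin n)) (hG : IsMop G)
    (u v : Fin n) (huv : u < v) (hadj : G.Adj u v)
    (x y : Fin n) (hx : x ∈ {z : Fin n | u ≤ z ∧ z ≤ v})
    (hy : y ∈ {z : Fin n | z ≤ u ∨ v ≤ z}) :
    (∀ p : G.Walk x y, p.length = G.dist x y → u ∈ p.support ∨ v ∈ p.support) ∧
    G.dist x y =
      min ((G.induce {z : Fin n | u ≤ z ∧ z ≤ v}).dist ⟨x, hx⟩ ⟨u, ⟨le_refl u, le_of_lt huv⟩⟩ +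
           (G.induce {z : Fin n | z ≤ u ∨ v ≤ z}).dist ⟨u, Or.inl (le_refl u)⟩ ⟨y, hy⟩)
          ((G.induce {z : Fin n | u ≤ z ∧ z ≤ v}).dist ⟨x, hx⟩ ⟨v, ⟨le_of_lt huv, le_refl v⟩⟩ +
           (G.induce {z : Fin n | z ≤ u ∨ v ≤ z}).dist ⟨v, Or.inr (le_refl v)⟩ ⟨y, hy⟩) := by
  have : Nonempty (Fin n) := ⟨x⟩
  have hconn := hG.connected
  have hsep (p : G.Walk x y) : u ∈ p.support ∨ v ∈ p.support :=
    hG.nonCrossing.mem_support_or_mem_support huv hadj p hx hy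
  refine ⟨fun p _ => hsep p, ?_⟩
  simp only [hG.nonCrossing.induce_dist_eq_of_mem_Icc huv hadj (hconn.preconnected _ _),
    hG.nonCrossing.induce_dist_eq_of_le_or_le huv hadj (hconn.preconnected _ _)]
  obtain ⟨p, hp⟩ := (hconn.preconnected x y).exists_walk_length_eq_dist
  refine le_antisymm (le_min hconn.dist_triangle hconn.dist_triangle) ?_
  rcases hsep p with hw | hw
  · exact (min_le_left _ _).trans (hp ▸ p.dist_add_dist_le_length hw)
  · exact (min_le_right _ _).trans (hp ▸ p.dist_add_dist_le_length hw)

/-- If a mop `G` is cut along a chord `uv` into the subgraphs induced by the two cycle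
intervals (each containing `u` and `v`), then for `x` in one side and `y` in the
other, every shortest path from `x` to `y` passes through `u` or `v`, and
`d_G(x,y)` is the minimum over the endpoints `w ∈ {u,v}` of
`d_{G_α}(x,w) + d_{G_β}(w,y)`. -/
theorem stmt_10 {n : ℕ} (G : SimpleGraph (Fin n)) (hG : IsMop G)
    (u v : Fin n) (huv : u < v) (hadj : G.Adj u v) (hchord : IsChord u v)
    (x y : Fin n) (hx : x ∈ {z : Fin n | u ≤ z ∧ z ≤ v})
    (hy : y ∈ {z : Fin n | z ≤ u ∨ v ≤ z}) :
    (∀ p : G.Walk x y, p.length = G.dist x y → u ∈ p.support ∨ v ∈ p.support) ∧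
    G.dist x y =
      min ((G.induce {z : Fin n | u ≤ z ∧ z ≤ v}).dist ⟨x, hx⟩ ⟨u, ⟨le_refl u, le_of_lt huv⟩⟩ +
           (G.induce {z : Fin n | z ≤ u ∨ v ≤ z}).dist ⟨u, Or.inl (le_refl u)⟩ ⟨y, hy⟩)
          ((G.induce {z : Fin n | u ≤ z ∧ z ≤ v}).dist ⟨x, hx⟩ ⟨v, ⟨le_of_lt huv, le_refl v⟩⟩ +
           (G.induce {z : Fin n | z ≤ u ∨ v ≤ z}).dist ⟨v, Or.inr (le_refl v)⟩ ⟨y, hy⟩) :=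
  stmt_10_general G hG u v huv hadj x y hx hy
end
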